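/- Let 𝔞 > 0, κ ∈ (1/2, 2/3), and ε > 0 with 3κ − 2 + 4ε < 0. For N ∈ ℕ, N ≥ 1, set b = 8π𝔞N^κ, and for p ∈ Λ*₊ let τ_p ∈ ℝ be defined by tanh(2τ_p) = −b/(|p|² + b), σ_p = sinh(τ_p), γ_p = cosh(τ_p). Let P_L = {p ∈ Λ*₊ : |p| ≤ N^{κ/2+ε}} and P_S = {p ∈ Λ*₊ : N^{κ/2−ε} ≤ |p| ≤ N^{κ/2+ε}}. Then there exists a constant C > 0 (depending only on 𝔞, κ, ε) such that for all N ≥ 1: sup_{p∈P_L} γ_p² ≤ C·N^{κ/2}; sup_{p∈P_L} σ_p² ≤ C·N^{κ/2}; Σ_{p∈P_L} |γ_p·σ_p| ≤ C·N^{3κ/2+ε}; Σ_{p∈P_L} γ_p² ≤ C·N^{3κ/2+3ε}; Σ_{p∈Λ*₊} σ_p² ≤ C·N^{3κ/2}; Σ_{p∈P_L} |p|²·σ_p² ≤ C·N^{5κ/2+ε}; Σ_{p∈P_S} σ_p² ≤ C·N^{3κ/2}; Σ_{p∈P_S} |p|²·σ_p² ≤ C·N^{5κ/2+ε}; sup_{p∈P_S}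 σ_p² ≤ C·N^{ε}; and sup_{p∈P_S} γ_p² ≤ C·N^{ε}. -/

import Mathlib

/-- The lattice point `2π·n ∈ ℝ³` associated with `n ∈ ℤ³`;
`Λ*₊ = 2πℤ³ ∖ {0}` is parametrized by `n ≠ 0`. -/
noncomputable def latticePt (n : Fin 3 → ℤ) : EuclideanSpace ℝ (Fin 3) :=
  WithLp.toLp 2 (fun i => 2 * Real.pi * (n i))

namespace BogAux

/-- sup-norm of a lattice point, as a natural number -/
def boxNorm (n : Fin 3 → ℤ) : ℕ := Finset.univ.sup fun i => (n i).natAbs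

lemma natAbs_le_boxNorm (n : Fin 3 → ℤ) (i : Fin 3) : (n i).natAbs ≤ boxNorm n :=
  Finset.le_sup (f := fun i => (n i).natAbs) (Finset.mem_univ i)

lemma boxNorm_eq_zero {n : Fin 3 → ℤ} : boxNorm n = 0 ↔ n = 0 := by
  constructor
  · intro h
    funext i
    have h1 := natAbs_le_boxNorm n i
    rw [h] at h1
    have : (n i).natAbs = 0 := Nat.le_zero.mp h1
    simpa [Int.natAbs_eq_zero] using this
  · intro h; subst h; simp [boxNorm]

lemma one_le_boxNorm {n : Fin 3 → ℤ} (hn : n ≠ 0) : 1 ≤ boxNorm n :=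
  Nat.pos_of_ne_zero (fun h => hn (boxNorm_eq_zero.mp h))

lemma exists_natAbs_eq_boxNorm (n : Fin 3 → ℤ) : ∃ i, (n i).natAbs = boxNorm n := by
  obtain ⟨i, _, hi⟩ := Finset.exists_mem_eq_sup Finset.univ
    (Finset.univ_nonempty) (fun i => (n i).natAbs)
  exact ⟨i, hi.symm⟩

lemma natAbs_cast_abs (a : ℤ) : ((a.natAbs : ℝ)) = |(a : ℝ)| := by
  rw [Nat.cast_natAbs]
  exact Int.cast_abs

lemma latticePt_norm_sq (n : Fin 3 → ℤ) :
    ‖latticePt n‖ ^ 2 = ∑ i : Fin 3, (2 * Real.pi * (n i : ℝ)) ^ 2 := by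
  rw [EuclideanSpace.norm_eq, Real.sq_sqrt (by positivity)]
  refine Finset.sum_congr rfl fun i _ => ?_
  simp only [latticePt]
  rw [Real.norm_eq_abs, sq_abs]

lemma pi_sq_lb : (9.85 : ℝ) ≤ Real.pi ^ 2 := by
  have h := Real.pi_gt_d6
  nlinarith

lemma pi_sq_ub : Real.pi ^ 2 ≤ (9.9 : ℝ) := by
  have h := Real.pi_lt_d6
  have h0 := Real.pi_gt_d6
  nlinarith

lemma X_lower (n : Fin 3 → ℤ) :
    39 * ((boxNorm n : ℝ)) ^ 2 ≤ ‖latticePt n‖ ^ 2 := by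
  obtain ⟨i, hi⟩ := exists_natAbs_eq_boxNorm n
  have hterm : (2 * Real.pi * (n i : ℝ)) ^ 2 ≤ ∑ j : Fin 3, (2 * Real.pi * (n j : ℝ)) ^ 2 :=
    Finset.single_le_sum (f := fun j => (2 * Real.pi * (n j : ℝ)) ^ 2)
      (fun j _ => sq_nonneg _) (Finset.mem_univ i)
  have habs : ((boxNorm n : ℝ)) ^ 2 = ((n i : ℝ)) ^ 2 := by
    rw [← hi, natAbs_cast_abs, sq_abs]
  rw [latticePt_norm_sq, habs]
  have h1 := pi_sq_lb
  nlinarith [mul_le_mul_of_nonneg_right h1 (sq_nonneg ((n i : ℝ)))]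

lemma X_upper (n : Fin 3 → ℤ) :
    ‖latticePt n‖ ^ 2 ≤ 119 * ((boxNorm n : ℝ)) ^ 2 := by
  rw [latticePt_norm_sq]
  have hb : ∀ i : Fin 3, (2 * Real.pi * (n i : ℝ)) ^ 2 ≤ (4 * Real.pi ^ 2) * ((boxNorm n : ℝ)) ^ 2 := by
    intro i
    have h1 : |(n i : ℝ)| ≤ (boxNorm n : ℝ) := by
      rw [← natAbs_cast_abs]
      exact_mod_cast natAbs_le_boxNorm n i
    have h2 : ((n i : ℝ)) ^ 2 ≤ ((boxNorm n : ℝ)) ^ 2 := by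
      rw [← sq_abs]
      exact pow_le_pow_left₀ (abs_nonneg _) h1 2
    nlinarith [sq_nonneg Real.pi, Real.pi_pos, mul_le_mul_of_nonneg_left h2 (mul_pos (by norm_num : (0:ℝ) < 4) (pow_pos Real.pi_pos 2)).le]
  calc ∑ i : Fin 3, (2 * Real.pi * (n i : ℝ)) ^ 2
      ≤ ∑ _i : Fin 3, (4 * Real.pi ^ 2) * ((boxNorm n : ℝ)) ^ 2 :=
        Finset.sum_le_sum fun i _ => hb i
    _ = 3 * ((4 * Real.pi ^ 2) * ((boxNorm n : ℝ)) ^ 2) := by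
        rw [Finset.sum_const]
        simp only [Finset.card_univ, Fintype.card_fin, nsmul_eq_mul]
        push_cast
        ring
    _ ≤ 119 * ((boxNorm n : ℝ)) ^ 2 := by
        nlinarith [mul_le_mul_of_nonneg_right pi_sq_ub (sq_nonneg ((boxNorm n : ℝ)))]

lemma boxNorm_le_norm (n : Fin 3 → ℤ) : ((boxNorm n : ℝ)) ≤ ‖latticePt n‖ := by
  have h1 := X_lower n
  have h2 : (0:ℝ) ≤ (boxNorm n : ℝ) := Nat.cast_nonneg _
  nlinarith [norm_nonneg (latticePt n)]

end BogAux

namespace BogAux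

/-- number of lattice points on the sup-norm shell of radius `m` -/
lemma card_shell (m : ℕ) (hm : 1 ≤ m) (s : Finset (Fin 3 → ℤ))
    (hs : ∀ n ∈ s, boxNorm n = m) : (s.card : ℝ) ≤ 26 * (m : ℝ) ^ 2 := by
  classical
  set A : Finset (Fin 3 → ℤ) := Finset.Icc (fun _ => -(m:ℤ)) (fun _ => (m:ℤ)) with hA
  set B : Finset (Fin 3 → ℤ) := Finset.Icc (fun _ => -(m:ℤ)+1) (fun _ => (m:ℤ)-1) with hB
  have hBA : B ⊆ A := by
    apply Finset.Icc_subset_Icc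
    · intro i; simp
    · intro i; simp
  have hsub : s ⊆ A \ B := by
    intro n hn
    have hbn := hs n hn
    have hall : ∀ i, (n i).natAbs ≤ m := fun i => hbn ▸ natAbs_le_boxNorm n i
    obtain ⟨i0, hi0⟩ := exists_natAbs_eq_boxNorm n
    rw [hbn] at hi0
    rw [Finset.mem_sdiff]
    constructor
    · rw [Finset.mem_Icc]
      constructor
      · exact Pi.le_def.mpr fun i => by have := hall i; show -(m:ℤ) ≤ n i; omega
      · exact Pi.le_def.mpr fun i => by have := hall i; show n i ≤ (m:ℤ); omega
    · rw [Finset.mem_Icc]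
      rintro ⟨h1, h2⟩
      have ha := h1 i0
      have hb := h2 i0
      simp only at ha hb
      omega
  have hcardA : A.card = (2*m+1)^3 := by
    rw [hA, Pi.card_Icc]
    simp only [Int.card_Icc]
    rw [Finset.prod_const]
    simp only [Finset.card_univ, Fintype.card_fin]
    congr 1
    omega
  have hcardB : B.card = (2*m-1)^3 := by
    rw [hB, Pi.card_Icc]
    simp only [Int.card_Icc]
    rw [Finset.prod_const]
    simp only [Finset.card_univ, Fintype.card_fin]
    congr 1
    omega
  have hm1 : (1:ℝ) ≤ (m:ℝ) := by exact_mod_cast hm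
  have hcast1 : ((2*m+1:ℕ):ℝ) = 2*(m:ℝ)+1 := by push_cast; ring
  have hcast2 : ((2*m-1:ℕ):ℝ) = 2*(m:ℝ)-1 := by
    rw [Nat.cast_sub (by omega)]; push_cast; ring
  have hcard : (s.card : ℝ) ≤ (2*(m:ℝ)+1)^3 - (2*(m:ℝ)-1)^3 := by
    have h1 : s.card ≤ (A \ B).card := Finset.card_le_card hsub
    have h2 : (A \ B).card = A.card - B.card := Finset.card_sdiff_of_subset hBA
    have h3 : B.card ≤ A.card := Finset.card_le_card hBA
    have h4 : ((A \ B).card : ℝ) = (A.card : ℝ) - (B.card : ℝ) := by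
      rw [h2, Nat.cast_sub h3]
    have h5 : (s.card : ℝ) ≤ ((A \ B).card : ℝ) := by exact_mod_cast h1
    rw [h4, hcardA, hcardB] at h5
    rw [Nat.cast_pow, Nat.cast_pow, hcast1, hcast2] at h5
    exact h5
  nlinarith [hcard, sq_nonneg ((m:ℝ))]

/-- master shell-decomposition bound for sums over the lattice -/
lemma shell_sum_le (h : ℕ → ℝ) (h0 : h 0 = 0) (hpos : ∀ m, 0 ≤ h m) (A : ℝ)
    (hA : ∀ t : Finset ℕ, (∑ m ∈ t, (m:ℝ)^2 * h m) ≤ A) :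
    Summable (fun n : Fin 3 → ℤ => h (boxNorm n)) ∧
      (∑' n : Fin 3 → ℤ, h (boxNorm n)) ≤ 26 * A := by
  classical
  have key : ∀ s : Finset (Fin 3 → ℤ), (∑ n ∈ s, h (boxNorm n)) ≤ 26 * A := by
    intro s
    rw [← Finset.sum_fiberwise_of_maps_to (g := boxNorm) (t := Finset.image boxNorm s)
        (fun n hn => Finset.mem_image_of_mem _ hn) (fun n => h (boxNorm n))]
    have step : ∀ m ∈ Finset.image boxNorm s,
        (∑ n ∈ s.filter (fun n => boxNorm n = m), h (boxNorm n)) ≤ 26 * (m:ℝ)^2 * h m := by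
      intro m _
      have heq : (∑ n ∈ s.filter (fun n => boxNorm n = m), h (boxNorm n))
          = ((s.filter (fun n => boxNorm n = m)).card : ℝ) * h m := by
        rw [Finset.sum_congr rfl (fun n hn => by rw [(Finset.mem_filter.mp hn).2])]
        rw [Finset.sum_const, nsmul_eq_mul]
      rw [heq]
      rcases Nat.eq_zero_or_pos m with hm | hm
      · subst hm; simp [h0]
      · have hmem : ∀ n ∈ s.filter (fun n => boxNorm n = m), boxNorm n = m :=
          fun n hn => (Finset.mem_filter.mp hn).2
        have hc := card_shell m hm _ hmem
        calc ((s.filter (fun n => boxNorm n = m)).card : ℝ) * h m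
            ≤ (26*(m:ℝ)^2) * h m := mul_le_mul_of_nonneg_right hc (hpos m)
          _ = 26 * (m:ℝ)^2 * h m := by ring
    calc ∑ m ∈ Finset.image boxNorm s, ∑ n ∈ s.filter (fun n => boxNorm n = m), h (boxNorm n)
        ≤ ∑ m ∈ Finset.image boxNorm s, 26 * (m:ℝ)^2 * h m := Finset.sum_le_sum step
      _ = 26 * ∑ m ∈ Finset.image boxNorm s, (m:ℝ)^2 * h m := by
          rw [Finset.mul_sum]
          exact Finset.sum_congr rfl fun m _ => by ring
      _ ≤ 26 * A := by
          have := hA (Finset.image boxNorm s)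
          linarith
  have hsum : Summable (fun n : Fin 3 → ℤ => h (boxNorm n)) :=
    summable_of_sum_le (fun n => hpos _) key
  exact ⟨hsum, Summable.tsum_le_of_sum_le hsum key⟩

/-- transfer to a subtype sum -/
lemma tsum_subtype_le_shell {P : (Fin 3 → ℤ) → Prop} (f : {n : Fin 3 → ℤ // P n} → ℝ)
    (h : ℕ → ℝ) (h0 : h 0 = 0) (hpos : ∀ m, 0 ≤ h m) (A : ℝ)
    (hA : ∀ t : Finset ℕ, (∑ m ∈ t, (m:ℝ)^2 * h m) ≤ A)
    (hf0 : ∀ p, 0 ≤ f p) (hfh : ∀ p, f p ≤ h (boxNorm p.1)) :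
    Summable f ∧ (∑' p, f p) ≤ 26 * A := by
  obtain ⟨hsum, hts⟩ := shell_sum_le h h0 hpos A hA
  have hsub : Summable (fun p : {n : Fin 3 → ℤ // P n} => h (boxNorm p.1)) :=
    hsum.subtype {n | P n}
  have hfsum : Summable f := Summable.of_nonneg_of_le hf0 hfh hsub
  refine ⟨hfsum, le_trans ?_ hts⟩
  exact Summable.tsum_le_tsum_of_inj (Subtype.val) Subtype.val_injective
    (fun c _ => hpos _) hfh hfsum hsum

end BogAux

namespace BogAux

lemma abs_le_of_sq_le (a c : ℝ) (hc : 0 ≤ c) (h : a^2 ≤ c^2) : |a| ≤ c := by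
  rw [← Real.sqrt_sq_eq_abs, ← Real.sqrt_sq hc]
  exact Real.sqrt_le_sqrt h

lemma sum_cut (t : Finset ℕ) (T G : ℝ) (hT : 0 ≤ T) (hG : 0 ≤ G) (g : ℕ → ℝ)
    (hg : ∀ m : ℕ, 1 ≤ m → (m : ℝ) ≤ T → g m ≤ G) :
    (∑ m ∈ t, if 1 ≤ m ∧ (m : ℝ) ≤ T then g m else 0) ≤ T * G := by
  classical
  rw [← Finset.sum_filter]
  have hsub : t.filter (fun m : ℕ => 1 ≤ m ∧ (m:ℝ) ≤ T) ⊆ Finset.Icc 1 ⌊T⌋₊ := by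
    intro m hm
    rw [Finset.mem_filter] at hm
    rw [Finset.mem_Icc]
    exact ⟨hm.2.1, Nat.le_floor hm.2.2⟩
  have hcard : ((t.filter (fun m : ℕ => 1 ≤ m ∧ (m:ℝ) ≤ T)).card : ℝ) ≤ T := by
    calc ((t.filter (fun m : ℕ => 1 ≤ m ∧ (m:ℝ) ≤ T)).card : ℝ)
        ≤ ((Finset.Icc 1 ⌊T⌋₊).card : ℝ) := by
          exact_mod_cast Finset.card_le_card hsub
      _ = (⌊T⌋₊ : ℝ) := by rw [Nat.card_Icc]; simp
      _ ≤ T := Nat.floor_le hT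
  calc (∑ m ∈ t.filter (fun m : ℕ => 1 ≤ m ∧ (m:ℝ) ≤ T), g m)
      ≤ (t.filter (fun m : ℕ => 1 ≤ m ∧ (m:ℝ) ≤ T)).card • G := by
        apply Finset.sum_le_card_nsmul
        intro m hm
        rw [Finset.mem_filter] at hm
        exact hg m hm.2.1 hm.2.2
    _ = ((t.filter (fun m : ℕ => 1 ≤ m ∧ (m:ℝ) ≤ T)).card : ℝ) * G := by
        rw [nsmul_eq_mul]
    _ ≤ T * G := mul_le_mul_of_nonneg_right hcard hG

lemma sum_tail (t : Finset ℕ) (T : ℝ) (hT : 0 < T) :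
    (∑ m ∈ t, if T < (m:ℝ) then 1/(m:ℝ)^2 else 0) ≤ 2 / T := by
  classical
  rw [← Finset.sum_filter]
  set a := ⌊T⌋₊ + 1 with ha
  have haT : T < (a:ℝ) := by
    rw [ha]; push_cast
    exact Nat.lt_floor_add_one T
  have h1a : 1 ≤ a := by omega
  set B := t.sup id with hB
  have hsub : t.filter (fun m : ℕ => T < (m:ℝ)) ⊆ Finset.Icc a B := by
    intro m hm
    rw [Finset.mem_filter] at hm
    rw [Finset.mem_Icc]
    constructor
    · have : (⌊T⌋₊ : ℝ) < (m:ℝ) := lt_of_le_of_lt (Nat.floor_le hT.le) hm.2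
      have : ⌊T⌋₊ < m := by exact_mod_cast this
      omega
    · exact Finset.le_sup (f := id) hm.1
  have step1 : (∑ m ∈ t.filter (fun m : ℕ => T < (m:ℝ)), 1/(m:ℝ)^2)
      ≤ ∑ m ∈ Finset.Icc a B, 1/(m:ℝ)^2 :=
    Finset.sum_le_sum_of_subset_of_nonneg hsub (fun m _ _ => by positivity)
  have step2 : (∑ m ∈ Finset.Icc a B, 1/(m:ℝ)^2)
      ≤ ∑ m ∈ Finset.Icc a B, (2/(m:ℝ) - 2/((m:ℝ)+1)) := by
    apply Finset.sum_le_sum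
    intro m hm
    rw [Finset.mem_Icc] at hm
    have hm1 : (1:ℝ) ≤ (m:ℝ) := by exact_mod_cast le_trans h1a hm.1
    have hm0 : (0:ℝ) < (m:ℝ) := by linarith
    have heq : 2/(m:ℝ) - 2/((m:ℝ)+1) = 2/((m:ℝ)*((m:ℝ)+1)) := by
      field_simp
      ring
    rw [heq, div_le_div_iff₀ (by positivity) (by positivity)]
    nlinarith
  have step3 : (∑ m ∈ Finset.Icc a B, (2/(m:ℝ) - 2/((m:ℝ)+1))) ≤ 2/(a:ℝ) := by
    by_cases hab : a ≤ B
    · rw [← Finset.Ico_add_one_right_eq_Icc, Finset.sum_Ico_eq_sum_range]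
      have htel : (∑ i ∈ Finset.range (B + 1 - a), (2/((a+i:ℕ):ℝ) - 2/(((a+i:ℕ):ℝ)+1)))
          = 2/(a:ℝ) - 2/(((a + (B+1-a) :ℕ)):ℝ) := by
        have := Finset.sum_range_sub' (f := fun i => 2/(((a+i:ℕ)):ℝ)) (n := B+1-a)
        rw [← this]
        apply Finset.sum_congr rfl
        intro i _
        push_cast
        ring_nf
      calc (∑ i ∈ Finset.range (B + 1 - a), (2/((a+i:ℕ):ℝ) - 2/(((a+i:ℕ):ℝ)+1)))
          = 2/(a:ℝ) - 2/(((a + (B+1-a):ℕ)):ℝ) := htel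
        _ ≤ 2/(a:ℝ) := by
            have : (0:ℝ) ≤ 2/(((a + (B+1-a):ℕ)):ℝ) := by positivity
            linarith
    · rw [Finset.Icc_eq_empty (by omega)]
      simp
      positivity
  have last : 2/(a:ℝ) ≤ 2/T := by
    apply div_le_div_of_nonneg_left (by norm_num) hT haT.le
  linarith

lemma hyper_core (b X T : ℝ) (hb : 0 < b) (hX : 0 < X)
    (ht : Real.tanh (2*T) = -b / (X + b)) :
    Real.cosh T ^ 2 = Real.sinh T ^ 2 + 1 ∧
    Real.sinh T ^ 2 ≤ |Real.cosh T * Real.sinh T| ∧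
    (Real.cosh T * Real.sinh T)^2 ≤ b/(8*X) ∧
    (Real.cosh T * Real.sinh T)^2 ≤ b^2/(4*X^2) ∧
    Real.sinh T ^ 2 ≤ b^2/(2*X^2) ∧
    Real.sinh T ^ 2 ≤ Real.sqrt (b/(2*X)) / 2 := by
  have hxb : (0:ℝ) < X + b := by positivity
  have hXX : (0:ℝ) < X*(X+2*b) := by positivity
  have hcp : (0:ℝ) < Real.cosh (2*T) := Real.cosh_pos _
  have hid : Real.cosh (2*T)^2 - Real.sinh (2*T)^2 = 1 := Real.cosh_sq_sub_sinh_sq _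
  have hsinh2 : Real.sinh (2*T) = (-b/(X+b)) * Real.cosh (2*T) := by
    rw [← ht, Real.tanh_eq_sinh_div_cosh]
    field_simp
  have hD2 : Real.cosh (2*T)^2 * (X*(X+2*b)) = (X+b)^2 := by
    have hid2 := hid
    rw [hsinh2] at hid2
    have h' : Real.cosh (2*T)^2 - (-b/(X+b))^2 * Real.cosh (2*T)^2 = 1 := by
      linear_combination hid2
    have hne : (X+b) ≠ 0 := ne_of_gt hxb
    field_simp at h'
    linear_combination h'
  have hD2' : Real.cosh (2*T)^2 = 1 + b^2/(X*(X+2*b)) := by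
    field_simp
    linarith [hD2]
  have hs2sq : Real.sinh (2*T)^2 = b^2/(X*(X+2*b)) := by
    have := hid
    rw [hD2'] at this
    linarith
  have hD1 : 1 ≤ Real.cosh (2*T) := Real.one_le_cosh _
  have hsinhT : Real.sinh T ^ 2 = (Real.cosh (2*T) - 1)/2 := by
    rw [Real.cosh_two_mul, Real.cosh_sq]
    ring
  have hcs : Real.cosh T * Real.sinh T = Real.sinh (2*T) / 2 := by
    rw [Real.sinh_two_mul]; ring
  have hb2x : b^2/(X*(X+2*b)) ≤ b/(2*X) := by
    rw [div_le_div_iff₀ hXX (by positivity)]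
    nlinarith [mul_pos hb (mul_pos hX hX)]
  have hb2x2 : b^2/(X*(X+2*b)) ≤ b^2/(X^2) := by
    apply div_le_div_of_nonneg_left (sq_nonneg b) (by positivity)
    nlinarith
  have hcssq : (Real.cosh T * Real.sinh T)^2 = b^2/(4*(X*(X+2*b))) := by
    rw [hcs, div_pow, hs2sq, div_div]
    norm_num
    ring_nf
  refine ⟨Real.cosh_sq T, ?_, ?_, ?_, ?_, ?_⟩
  · -- sinh² ≤ |cosh·sinh|
    have h1 : |Real.sinh T| ≤ |Real.cosh T| := by
      apply abs_le_of_sq_le _ _ (abs_nonneg _)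
      rw [sq_abs, Real.cosh_sq]
      linarith [sq_nonneg (Real.sinh T)]
    have h2 : Real.sinh T ^ 2 = |Real.sinh T| * |Real.sinh T| := by
      rw [← abs_mul, ← sq, abs_of_nonneg (sq_nonneg _)]
    calc Real.sinh T ^ 2 = |Real.sinh T| * |Real.sinh T| := h2
      _ ≤ |Real.cosh T| * |Real.sinh T| := mul_le_mul_of_nonneg_right h1 (abs_nonneg _)
      _ = |Real.cosh T * Real.sinh T| := (abs_mul _ _).symm
  · -- (cosh·sinh)² ≤ b/(8X)
    rw [hcssq, div_le_div_iff₀ (by positivity) (by positivity)]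
    nlinarith [mul_pos hb (mul_pos hX hX)]
  · -- (cosh·sinh)² ≤ b²/(4X²)
    rw [hcssq, div_le_div_iff₀ (by positivity) (by positivity)]
    nlinarith [mul_nonneg (mul_nonneg (mul_nonneg hb.le hb.le) hb.le) hX.le]
  · -- sinh² ≤ b²/(2X²)
    rw [hsinhT]
    have hDle : Real.cosh (2*T) - 1 ≤ Real.cosh (2*T)^2 - 1 := by
      nlinarith
    have heq2 : Real.cosh (2*T)^2 - 1 = b^2/(X*(X+2*b)) := by rw [hD2']; ring
    rw [heq2] at hDle
    have h3 : b^2/(X*(X+2*b)) ≤ b^2/(X^2) := hb2x2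
    have h4 : b^2/(X^2) / 2 = b^2/(2*X^2) := by ring
    linarith [hDle, h3]
  · -- sinh² ≤ √(b/(2X))/2
    rw [hsinhT]
    set r := Real.sqrt (b/(2*X)) with hr
    have hr0 : 0 ≤ r := Real.sqrt_nonneg _
    have hr2 : r^2 = b/(2*X) := Real.sq_sqrt (by positivity)
    have hDub : Real.cosh (2*T) ≤ 1 + r := by
      have h1 : Real.cosh (2*T)^2 ≤ (1+r)^2 := by
        rw [hD2']
        have h5 : b^2/(X*(X+2*b)) ≤ r^2 := by rw [hr2]; exact hb2x
        have hexp : (1+r)^2 = 1 + 2*r + r^2 := by ring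
        rw [hexp]
        linarith
      calc Real.cosh (2*T) = |Real.cosh (2*T)| := (abs_of_pos hcp).symm
        _ ≤ 1 + r := abs_le_of_sq_le _ _ (by positivity) h1
    linarith

end BogAux

namespace BogAux

set_option maxHeartbeats 1000000 in
lemma pointwise_bounds (b X A T : ℝ) (hb : 0 < b) (hA1 : 1 ≤ A) (hX39 : 39*A^2 ≤ X)
    (ht : Real.tanh (2*T) = -b / (X + b)) :
    Real.cosh T^2 = Real.sinh T^2 + 1 ∧
    Real.sinh T^2 ≤ |Real.cosh T * Real.sinh T| ∧
    |Real.cosh T * Real.sinh T| ≤ Real.sqrt b/(17*A) ∧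
    |Real.cosh T * Real.sinh T| ≤ b/(78*A^2) ∧
    Real.sinh T^2 ≤ b^2/(3042*A^4) ∧
    Real.sinh T^2 ≤ Real.sqrt b/16 := by
  have hA0 : (0:ℝ) < A := by linarith
  have hA2 : (1:ℝ) ≤ A^2 := by nlinarith
  have hX0 : (0:ℝ) < X := by nlinarith
  have h39 : (0:ℝ) ≤ 39*A^2 := by positivity
  have hX2 : (39*A^2)^2 ≤ X^2 := by
    nlinarith [mul_nonneg (sub_nonneg.mpr hX39) (by linarith : (0:ℝ) ≤ X + 39*A^2)]
  have hsb0 : (0:ℝ) < Real.sqrt b := Real.sqrt_pos.mpr hb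
  obtain ⟨c1, c2, c3, c4, c5, c6⟩ := hyper_core b X T hb hX0 ht
  refine ⟨c1, c2, ?_, ?_, ?_, ?_⟩
  · have he : (Real.sqrt b/(17*A))^2 = b/(289*A^2) := by
      rw [div_pow, Real.sq_sqrt hb.le]
      ring_nf
    have h2 : b/(8*X) ≤ b/(289*A^2) := by
      rw [div_le_div_iff₀ (by linarith) (by nlinarith)]
      nlinarith [mul_le_mul_of_nonneg_left hX39 hb.le]
    refine abs_le_of_sq_le _ _ (le_of_lt (div_pos hsb0 (by linarith))) ?_
    rw [he]
    exact le_trans c3 h2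
  · have he : (b/(78*A^2))^2 = b^2/(6084*A^4) := by
      rw [div_pow]
      ring_nf
    have h2 : b^2/(4*X^2) ≤ b^2/(6084*A^4) := by
      rw [div_le_div_iff₀ (by nlinarith) (by nlinarith)]
      nlinarith [mul_le_mul_of_nonneg_left hX2 (sq_nonneg b)]
    refine abs_le_of_sq_le _ _ (le_of_lt (div_pos hb (by nlinarith))) ?_
    rw [he]
    exact le_trans c4 h2
  · have h2 : b^2/(2*X^2) ≤ b^2/(3042*A^4) := by
      rw [div_le_div_iff₀ (by nlinarith) (by nlinarith)]
      nlinarith [mul_le_mul_of_nonneg_left hX2 (sq_nonneg b)]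
    exact le_trans c5 h2
  · have h1 : b/(2*X) ≤ b/64 := by
      rw [div_le_div_iff₀ (by linarith) (by norm_num)]
      nlinarith [mul_le_mul_of_nonneg_left hX39 hb.le, mul_le_mul_of_nonneg_left hA2 hb.le]
    have h2 : Real.sqrt (b/(2*X)) ≤ Real.sqrt (b/64) := Real.sqrt_le_sqrt h1
    have h3 : Real.sqrt (b/64) = Real.sqrt b/8 := by
      rw [show b/64 = (Real.sqrt b/8)^2 by rw [div_pow, Real.sq_sqrt hb.le]; norm_num]
      exact Real.sqrt_sq (by positivity)
    rw [h3] at h2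
    linarith

set_option maxHeartbeats 1000000 in
lemma pointwise_bounds6 (b X A s2 : ℝ) (hb : 0 < b) (hA1 : 1 ≤ A)
    (hXle : X ≤ 119*A^2) (hs2 : 0 ≤ s2)
    (h1 : s2 ≤ Real.sqrt b/(17*A)) (h2 : s2 ≤ b^2/(3042*A^4)) :
    X*s2 ≤ min (7*A*Real.sqrt b) (b^2/(25*A^2)) := by
  have hA0 : (0:ℝ) < A := by linarith
  have hstep : X*s2 ≤ 119*A^2*s2 := by
    rcases eq_or_lt_of_le hs2 with h | h
    · nlinarith
    · exact mul_le_mul_of_nonneg_right hXle hs2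
  refine le_min ?_ ?_
  · have ha : 119*A^2*s2 ≤ 119*A^2*(Real.sqrt b/(17*A)) :=
      mul_le_mul_of_nonneg_left h1 (by nlinarith)
    have he : 119*A^2*(Real.sqrt b/(17*A)) = 7*A*Real.sqrt b := by
      field_simp
      ring
    linarith
  · have ha : 119*A^2*s2 ≤ 119*A^2*(b^2/(3042*A^4)) :=
      mul_le_mul_of_nonneg_left h2 (by nlinarith)
    have he : 119*A^2*(b^2/(3042*A^4)) = (119/3042)*(b^2/A^2) := by
      field_simp
    have hf : (119/3042)*(b^2/A^2) ≤ (1/25)*(b^2/A^2) := by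
      apply mul_le_mul_of_nonneg_right (by norm_num)
      positivity
    have hg : (1/25)*(b^2/A^2) = b^2/(25*A^2) := by ring
    linarith

end BogAux


open BogAux
set_option maxHeartbeats 2000000

/-- **σ/γ-bounds of Lemma 2.2 (lm:nu-norms)**.  With `b = 8π𝔞N^κ`, `tanh(2τ_p) = −b/(|p|²+b)`,
`σ_p = sinh τ_p`, `γ_p = cosh τ_p`, `P_L = {|p| ≤ N^{κ/2+ε}}`,
`P_S = {N^{κ/2−ε} ≤ |p| ≤ N^{κ/2+ε}}`, there is `C > 0` (depending only on `𝔞, κ, ε`)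
such that for all `N ≥ 1` the stated sup- and sum-bounds hold. -/
theorem bogoliubov_coefficient_bounds
    (𝔞 κ ε : ℝ) (h𝔞 : 0 < 𝔞) (hκ1 : 1 / 2 < κ) (hκ2 : κ < 2 / 3)
    (hε : 0 < ε) (hκε : 3 * κ - 2 + 4 * ε < 0) :
    ∃ C > 0, ∀ N : ℕ, 1 ≤ N → ∀ τ σ γ : (Fin 3 → ℤ) → ℝ,
      (∀ n : Fin 3 → ℤ, n ≠ 0 →
        Real.tanh (2 * τ n)
          = -(8 * Real.pi * 𝔞 * (N : ℝ) ^ κ)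
              / (‖latticePt n‖ ^ 2 + 8 * Real.pi * 𝔞 * (N : ℝ) ^ κ)) →
      (∀ n, σ n = Real.sinh (τ n)) → (∀ n, γ n = Real.cosh (τ n)) →
      -- sup_{p∈P_L} γ_p² ≤ C·N^{κ/2}
      ((∀ n : Fin 3 → ℤ, n ≠ 0 → ‖latticePt n‖ ≤ (N : ℝ) ^ (κ / 2 + ε) →
          (γ n) ^ 2 ≤ C * (N : ℝ) ^ (κ / 2)) ∧
      -- sup_{p∈P_L} σ_p² ≤ C·N^{κ/2}
      (∀ n : Fin 3 → ℤ, n ≠ 0 → ‖latticePt n‖ ≤ (N : ℝ) ^ (κ / 2 + ε) →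
          (σ n) ^ 2 ≤ C * (N : ℝ) ^ (κ / 2)) ∧
      -- Σ_{p∈P_L} |γ_p σ_p| ≤ C·N^{3κ/2+ε}
      (∑' p : {n : Fin 3 → ℤ // n ≠ 0 ∧ ‖latticePt n‖ ≤ (N : ℝ) ^ (κ / 2 + ε)},
          |γ p.1 * σ p.1| ≤ C * (N : ℝ) ^ (3 * κ / 2 + ε)) ∧
      -- Σ_{p∈P_L} γ_p² ≤ C·N^{3κ/2+3ε}
      (∑' p : {n : Fin 3 → ℤ // n ≠ 0 ∧ ‖latticePt n‖ ≤ (N : ℝ) ^ (κ / 2 + ε)},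
          (γ p.1) ^ 2 ≤ C * (N : ℝ) ^ (3 * κ / 2 + 3 * ε)) ∧
      -- Σ_{p∈Λ*₊} σ_p² ≤ C·N^{3κ/2} (with summability)
      Summable (fun p : {n : Fin 3 → ℤ // n ≠ 0} => (σ p.1) ^ 2) ∧
      (∑' p : {n : Fin 3 → ℤ // n ≠ 0}, (σ p.1) ^ 2 ≤ C * (N : ℝ) ^ (3 * κ / 2)) ∧
      -- Σ_{p∈P_L} |p|²σ_p² ≤ C·N^{5κ/2+ε}
      (∑' p : {n : Fin 3 → ℤ // n ≠ 0 ∧ ‖latticePt n‖ ≤ (N : ℝ) ^ (κ / 2 + ε)},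
          ‖latticePt p.1‖ ^ 2 * (σ p.1) ^ 2 ≤ C * (N : ℝ) ^ (5 * κ / 2 + ε)) ∧
      -- Σ_{p∈P_S} σ_p² ≤ C·N^{3κ/2}
      (∑' p : {n : Fin 3 → ℤ //
            n ≠ 0 ∧ (N : ℝ) ^ (κ / 2 - ε) ≤ ‖latticePt n‖ ∧ ‖latticePt n‖ ≤ (N : ℝ) ^ (κ / 2 + ε)},
          (σ p.1) ^ 2 ≤ C * (N : ℝ) ^ (3 * κ / 2)) ∧
      -- Σ_{p∈P_S} |p|²σ_p² ≤ C·N^{5κ/2+ε}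
      (∑' p : {n : Fin 3 → ℤ //
            n ≠ 0 ∧ (N : ℝ) ^ (κ / 2 - ε) ≤ ‖latticePt n‖ ∧ ‖latticePt n‖ ≤ (N : ℝ) ^ (κ / 2 + ε)},
          ‖latticePt p.1‖ ^ 2 * (σ p.1) ^ 2 ≤ C * (N : ℝ) ^ (5 * κ / 2 + ε)) ∧
      -- sup_{p∈P_S} σ_p² ≤ C·N^{ε}
      (∀ n : Fin 3 → ℤ, n ≠ 0 → (N : ℝ) ^ (κ / 2 - ε) ≤ ‖latticePt n‖ →
          ‖latticePt n‖ ≤ (N : ℝ) ^ (κ / 2 + ε) → (σ n) ^ 2 ≤ C * (N : ℝ) ^ ε) ∧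
      -- sup_{p∈P_S} γ_p² ≤ C·N^{ε}
      (∀ n : Fin 3 → ℤ, n ≠ 0 → (N : ℝ) ^ (κ / 2 - ε) ≤ ‖latticePt n‖ →
          ‖latticePt n‖ ≤ (N : ℝ) ^ (κ / 2 + ε) → (γ n) ^ 2 ≤ C * (N : ℝ) ^ ε)) := by
    classical
  have hπ := Real.pi_pos
  set a8 : ℝ := 8 * Real.pi * 𝔞 with ha8def
  have ha8 : 0 < a8 := by rw [ha8def]; positivity
  set sa : ℝ := Real.sqrt a8 with hsadef
  have hsa : 0 < sa := Real.sqrt_pos.mpr ha8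
  have hsa2 : sa^2 = a8 := Real.sq_sqrt ha8.le
  have h3nn : 0 ≤ sa^3 := pow_nonneg hsa.le 3
  have h5nn : 0 ≤ sa^5 := pow_nonneg hsa.le 5
  refine ⟨(1+sa) + (2*sa^3+a8) + (26+(2*sa^3+a8)) + 26*sa^3 + (182*sa^5+2*a8^2),
    by nlinarith [h3nn, h5nn, ha8, hsa, sq_nonneg a8], ?_⟩
  set Ctot : ℝ := (1+sa) + (2*sa^3+a8) + (26+(2*sa^3+a8)) + 26*sa^3 + (182*sa^5+2*a8^2)
    with hCtot
  have hCge1 : 1 + sa ≤ Ctot := by rw [hCtot]; nlinarith [h3nn, h5nn, ha8, sq_nonneg a8]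
  have hCge3 : 2*sa^3+a8 ≤ Ctot := by rw [hCtot]; nlinarith [h3nn, h5nn, ha8, hsa, sq_nonneg a8]
  have hCge4 : 26+(2*sa^3+a8) ≤ Ctot := by
    rw [hCtot]; nlinarith [h3nn, h5nn, ha8, hsa, sq_nonneg a8]
  have hCge5 : 26*sa^3 ≤ Ctot := by rw [hCtot]; nlinarith [h3nn, h5nn, ha8, hsa, sq_nonneg a8]
  have hCge6 : 182*sa^5+2*a8^2 ≤ Ctot := by
    rw [hCtot]; nlinarith [h3nn, h5nn, ha8, hsa, sq_nonneg a8]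
  intro N hN τ σ γ hτ hσ hγ
  set Nr : ℝ := (N : ℝ) with hNrdef
  have hN1 : (1:ℝ) ≤ Nr := by rw [hNrdef]; exact_mod_cast hN
  have hN0 : (0:ℝ) < Nr := lt_of_lt_of_le one_pos hN1
  set b : ℝ := a8 * Nr ^ κ with hbdef
  have hrp : ∀ e : ℝ, 0 < Nr ^ e := fun e => Real.rpow_pos_of_pos hN0 e
  have hb : 0 < b := by rw [hbdef]; exact mul_pos ha8 (hrp κ)
  have hmono : ∀ e e' : ℝ, e ≤ e' → Nr^e ≤ Nr^e' :=
    fun e e' h => Real.rpow_le_rpow_of_exponent_le hN1 h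
  have hone : ∀ e : ℝ, 0 ≤ e → (1:ℝ) ≤ Nr ^ e := by
    intro e he
    have := hmono 0 e he
    rwa [Real.rpow_zero] at this
  have hadd : ∀ e e' : ℝ, Nr^e * Nr^e' = Nr^(e+e') := fun e e' => (Real.rpow_add hN0 e e').symm
  have hsq2 : ∀ e : ℝ, (Nr^e)^2 = Nr^(2*e) := by
    intro e
    rw [← Real.rpow_natCast (Nr^e) 2, ← Real.rpow_mul hN0.le]
    norm_num
    rw [mul_comm]
  have hsqN : Real.sqrt (Nr^κ) = Nr^(κ/2) := by
    have h2 : (Nr^(κ/2))^2 = Nr^κ := by rw [hsq2]; rw [show 2*(κ/2) = κ by ring]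
    rw [← h2, Real.sqrt_sq (hrp _).le]
  have hsb : Real.sqrt b = sa * Nr^(κ/2) := by
    rw [hbdef, Real.sqrt_mul ha8.le, hsqN, ← hsadef]
  have hsbpos : 0 < Real.sqrt b := Real.sqrt_pos.mpr hb
  have hss : Real.sqrt b * Real.sqrt b = b := Real.mul_self_sqrt hb.le
  -- transfer helper
  have final : ∀ c e x : ℝ, c ≤ Ctot → x ≤ c * Nr^e → x ≤ Ctot * Nr^e :=
    fun c e x hcC hx => le_trans hx (mul_le_mul_of_nonneg_right hcC (hrp e).le)
  -- exponent bookkeeping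
  have hE3 : Real.sqrt b * b = sa^3 * Nr^(3*κ/2) := by
    rw [hsb, hbdef, ← hsa2]
    calc sa * Nr^(κ/2) * (sa^2 * Nr^κ) = sa^3 * (Nr^(κ/2) * Nr^κ) := by ring
      _ = sa^3 * Nr^(κ/2 + κ) := by rw [hadd]
      _ = sa^3 * Nr^(3*κ/2) := by rw [show κ/2 + κ = 3*κ/2 by ring]
  have hE5 : Real.sqrt b * b^2 = sa^5 * Nr^(5*κ/2) := by
    rw [hsb, hbdef, ← hsa2]
    calc sa * Nr^(κ/2) * (sa^2 * Nr^κ)^2 = sa^5 * (Nr^(κ/2) * Nr^κ * Nr^κ) := by ring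
      _ = sa^5 * (Nr^(κ/2 + κ) * Nr^κ) := by rw [hadd]
      _ = sa^5 * Nr^(κ/2 + κ + κ) := by rw [hadd]
      _ = sa^5 * Nr^(5*κ/2) := by rw [show κ/2 + κ + κ = 5*κ/2 by ring]
  have hbRL : Nr^(κ/2+ε) * b = a8 * Nr^(3*κ/2+ε) := by
    rw [hbdef]
    calc Nr^(κ/2+ε) * (a8 * Nr^κ) = a8 * (Nr^(κ/2+ε) * Nr^κ) := by ring
      _ = a8 * Nr^(κ/2+ε+κ) := by rw [hadd]
      _ = a8 * Nr^(3*κ/2+ε) := by rw [show κ/2+ε+κ = 3*κ/2+ε by ring]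
  have hb2RL : Nr^(κ/2+ε) * b^2 = a8^2 * Nr^(5*κ/2+ε) := by
    rw [hbdef]
    calc Nr^(κ/2+ε) * (a8 * Nr^κ)^2 = a8^2 * (Nr^(κ/2+ε) * Nr^κ * Nr^κ) := by ring
      _ = a8^2 * (Nr^(κ/2+ε+κ) * Nr^κ) := by rw [hadd]
      _ = a8^2 * Nr^(κ/2+ε+κ+κ) := by rw [hadd]
      _ = a8^2 * Nr^(5*κ/2+ε) := by rw [show κ/2+ε+κ+κ = 5*κ/2+ε by ring]
  have hRL3 : Nr^(κ/2+ε) * (Nr^(κ/2+ε))^2 = Nr^(3*κ/2+3*ε) := by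
    calc Nr^(κ/2+ε) * (Nr^(κ/2+ε))^2 = Nr^(κ/2+ε) * Nr^(κ/2+ε) * Nr^(κ/2+ε) := by ring
      _ = Nr^(κ/2+ε+(κ/2+ε)) * Nr^(κ/2+ε) := by rw [hadd]
      _ = Nr^(κ/2+ε+(κ/2+ε)+(κ/2+ε)) := by rw [hadd]
      _ = Nr^(3*κ/2+3*ε) := by rw [show κ/2+ε+(κ/2+ε)+(κ/2+ε) = 3*κ/2+3*ε by ring]
  -- pointwise bounds
  have PW : ∀ n : Fin 3 → ℤ, n ≠ 0 →
      γ n^2 = σ n^2 + 1 ∧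
      σ n^2 ≤ |γ n * σ n| ∧
      |γ n * σ n| ≤ Real.sqrt b / (17*((boxNorm n : ℝ))) ∧
      |γ n * σ n| ≤ b / (78*((boxNorm n : ℝ))^2) ∧
      σ n^2 ≤ b^2 / (3042*((boxNorm n : ℝ))^4) ∧
      σ n^2 ≤ Real.sqrt b / 16 := by
    intro n hn
    have hm1 : (1:ℝ) ≤ (boxNorm n : ℝ) := by exact_mod_cast one_le_boxNorm hn
    obtain ⟨c1, c2, c3, c4, c5, c6⟩ :=
      pointwise_bounds b (‖latticePt n‖^2) ((boxNorm n : ℝ)) (τ n) hb hm1 (X_lower n) (hτ n hn)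
    rw [← hσ n, ← hγ n] at c1 c2 c3 c4
    rw [← hσ n] at c5 c6
    exact ⟨c1, c2, c3, c4, c5, c6⟩
  -- finite κ-sum bounds
  have hA3 : ∀ t : Finset ℕ, (∑ m ∈ t, (m:ℝ)^2 *
      (if 1 ≤ m ∧ (m:ℝ) ≤ Nr^(κ/2+ε) then b/(78*(m:ℝ)^2) else 0))
      ≤ Nr^(κ/2+ε)*(b/78) := by
    intro t
    have hper : ∀ m ∈ t, (m:ℝ)^2 *
        (if 1 ≤ m ∧ (m:ℝ) ≤ Nr^(κ/2+ε) then b/(78*(m:ℝ)^2) else 0)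
        ≤ (if 1 ≤ m ∧ (m:ℝ) ≤ Nr^(κ/2+ε) then b/78 else 0) := by
      intro m _
      split_ifs with hc
      · have hm1 : (1:ℝ) ≤ (m:ℝ) := by exact_mod_cast hc.1
        have hm0 : (m:ℝ) ≠ 0 := ne_of_gt (lt_of_lt_of_le one_pos hm1)
        have : (m:ℝ)^2 * (b/(78*(m:ℝ)^2)) = b/78 := by field_simp
        linarith only [this]
      · simp
    calc (∑ m ∈ t, (m:ℝ)^2 * (if 1 ≤ m ∧ (m:ℝ) ≤ Nr^(κ/2+ε) then b/(78*(m:ℝ)^2) else 0))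
        ≤ ∑ m ∈ t, (if 1 ≤ m ∧ (m:ℝ) ≤ Nr^(κ/2+ε) then b/78 else 0) := Finset.sum_le_sum hper
      _ ≤ Nr^(κ/2+ε)*(b/78) := by
          apply sum_cut t (Nr^(κ/2+ε)) (b/78) (hrp _).le (by positivity) (fun _ => b/78)
          intro m _ _
          exact le_refl _
  have hA4 : ∀ t : Finset ℕ, (∑ m ∈ t, (m:ℝ)^2 *
      (if 1 ≤ m ∧ (m:ℝ) ≤ Nr^(κ/2+ε) then 1 + b/(78*(m:ℝ)^2) else 0))
      ≤ Nr^(κ/2+ε)*((Nr^(κ/2+ε))^2) + Nr^(κ/2+ε)*(b/78) := by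
    intro t
    have hper : ∀ m ∈ t, (m:ℝ)^2 *
        (if 1 ≤ m ∧ (m:ℝ) ≤ Nr^(κ/2+ε) then 1 + b/(78*(m:ℝ)^2) else 0)
        ≤ (if 1 ≤ m ∧ (m:ℝ) ≤ Nr^(κ/2+ε) then (m:ℝ)^2 else 0)
          + (if 1 ≤ m ∧ (m:ℝ) ≤ Nr^(κ/2+ε) then b/78 else 0) := by
      intro m _
      split_ifs with hc
      · have hm1 : (1:ℝ) ≤ (m:ℝ) := by exact_mod_cast hc.1
        have hm0 : (m:ℝ) ≠ 0 := ne_of_gt (lt_of_lt_of_le one_pos hm1)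
        have : (m:ℝ)^2 * (b/(78*(m:ℝ)^2)) = b/78 := by field_simp
        have hexp : (m:ℝ)^2 * (1 + b/(78*(m:ℝ)^2)) = (m:ℝ)^2 + (m:ℝ)^2 * (b/(78*(m:ℝ)^2)) := by
          ring
        linarith only [this, hexp]
      · simp
    calc (∑ m ∈ t, (m:ℝ)^2 *
          (if 1 ≤ m ∧ (m:ℝ) ≤ Nr^(κ/2+ε) then 1 + b/(78*(m:ℝ)^2) else 0))
        ≤ ∑ m ∈ t, ((if 1 ≤ m ∧ (m:ℝ) ≤ Nr^(κ/2+ε) then (m:ℝ)^2 else 0)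
          + (if 1 ≤ m ∧ (m:ℝ) ≤ Nr^(κ/2+ε) then b/78 else 0)) := Finset.sum_le_sum hper
      _ = (∑ m ∈ t, (if 1 ≤ m ∧ (m:ℝ) ≤ Nr^(κ/2+ε) then (m:ℝ)^2 else 0))
          + (∑ m ∈ t, (if 1 ≤ m ∧ (m:ℝ) ≤ Nr^(κ/2+ε) then b/78 else 0)) :=
          Finset.sum_add_distrib
      _ ≤ Nr^(κ/2+ε)*((Nr^(κ/2+ε))^2) + Nr^(κ/2+ε)*(b/78) := by
          apply add_le_add
          · apply sum_cut t (Nr^(κ/2+ε)) ((Nr^(κ/2+ε))^2) (hrp _).le (by positivity)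
              (fun m => (m:ℝ)^2)
            intro m _ hmT
            exact pow_le_pow_left₀ (Nat.cast_nonneg m) hmT 2
          · apply sum_cut t (Nr^(κ/2+ε)) (b/78) (hrp _).le (by positivity) (fun _ => b/78)
            intro m _ _
            exact le_refl _
  have hA5 : ∀ t : Finset ℕ, (∑ m ∈ t, (m:ℝ)^2 *
      (if 1 ≤ m then min (Real.sqrt b/(17*(m:ℝ))) (b^2/(3042*(m:ℝ)^4)) else 0))
      ≤ Real.sqrt b*(b/17) + b^2/3042*(2/Real.sqrt b) := by
    intro t
    have hper : ∀ m ∈ t, (m:ℝ)^2 *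
        (if 1 ≤ m then min (Real.sqrt b/(17*(m:ℝ))) (b^2/(3042*(m:ℝ)^4)) else 0)
        ≤ (if 1 ≤ m ∧ (m:ℝ) ≤ Real.sqrt b then (m:ℝ)*Real.sqrt b/17 else 0)
          + b^2/3042*(if Real.sqrt b < (m:ℝ) then 1/(m:ℝ)^2 else 0) := by
      intro m _
      have hrhs1 : (0:ℝ) ≤ (if 1 ≤ m ∧ (m:ℝ) ≤ Real.sqrt b then (m:ℝ)*Real.sqrt b/17 else 0) := by
        split_ifs
        · positivity
        · exact le_refl _
      have hrhs2 : (0:ℝ) ≤ b^2/3042*(if Real.sqrt b < (m:ℝ) then 1/(m:ℝ)^2 else 0) := by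
        split_ifs
        · positivity
        · simp
      by_cases hm : 1 ≤ m
      · have hm1 : (1:ℝ) ≤ (m:ℝ) := by exact_mod_cast hm
        have hm0 : (m:ℝ) ≠ 0 := ne_of_gt (lt_of_lt_of_le one_pos hm1)
        rw [if_pos hm]
        by_cases hs : (m:ℝ) ≤ Real.sqrt b
        · rw [if_pos ⟨hm, hs⟩]
          have h1 : (m:ℝ)^2 * min (Real.sqrt b/(17*(m:ℝ))) (b^2/(3042*(m:ℝ)^4))
              ≤ (m:ℝ)^2 * (Real.sqrt b/(17*(m:ℝ))) :=
            mul_le_mul_of_nonneg_left (min_le_left _ _) (sq_nonneg _)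
          have h2 : (m:ℝ)^2 * (Real.sqrt b/(17*(m:ℝ))) = (m:ℝ)*Real.sqrt b/17 := by
            field_simp
          linarith only [h1, h2, hrhs2]
        · rw [if_neg (fun hh => hs hh.2), if_pos (lt_of_not_ge hs)]
          have h1 : (m:ℝ)^2 * min (Real.sqrt b/(17*(m:ℝ))) (b^2/(3042*(m:ℝ)^4))
              ≤ (m:ℝ)^2 * (b^2/(3042*(m:ℝ)^4)) :=
            mul_le_mul_of_nonneg_left (min_le_right _ _) (sq_nonneg _)
          have h2 : (m:ℝ)^2 * (b^2/(3042*(m:ℝ)^4)) = b^2/3042*(1/(m:ℝ)^2) := by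
            field_simp
          linarith only [h1, h2, hrhs1]
      · rw [if_neg hm, mul_zero]
        linarith only [hrhs1, hrhs2]
    calc (∑ m ∈ t, (m:ℝ)^2 *
          (if 1 ≤ m then min (Real.sqrt b/(17*(m:ℝ))) (b^2/(3042*(m:ℝ)^4)) else 0))
        ≤ ∑ m ∈ t, ((if 1 ≤ m ∧ (m:ℝ) ≤ Real.sqrt b then (m:ℝ)*Real.sqrt b/17 else 0)
          + b^2/3042*(if Real.sqrt b < (m:ℝ) then 1/(m:ℝ)^2 else 0)) := Finset.sum_le_sum hper
      _ = (∑ m ∈ t, (if 1 ≤ m ∧ (m:ℝ) ≤ Real.sqrt b then (m:ℝ)*Real.sqrt b/17 else 0))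
          + (∑ m ∈ t, b^2/3042*(if Real.sqrt b < (m:ℝ) then 1/(m:ℝ)^2 else 0)) :=
          Finset.sum_add_distrib
      _ ≤ Real.sqrt b*(b/17) + b^2/3042*(2/Real.sqrt b) := by
          apply add_le_add
          · apply sum_cut t (Real.sqrt b) (b/17) (Real.sqrt_nonneg b) (by positivity)
              (fun m => (m:ℝ)*Real.sqrt b/17)
            intro m _ hmT
            have h1 : (m:ℝ)*Real.sqrt b ≤ Real.sqrt b*Real.sqrt b :=
              mul_le_mul_of_nonneg_right hmT (Real.sqrt_nonneg b)
            rw [hss] at h1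
            linarith only [h1]
          · rw [← Finset.mul_sum]
            exact mul_le_mul_of_nonneg_left (sum_tail t (Real.sqrt b) hsbpos) (by positivity)
  have hA6 : ∀ t : Finset ℕ, (∑ m ∈ t, (m:ℝ)^2 *
      (if 1 ≤ m ∧ (m:ℝ) ≤ Nr^(κ/2+ε) then b^2/(25*(m:ℝ)^2) else 0))
      ≤ Nr^(κ/2+ε)*(b^2/25) := by
    intro t
    have hper : ∀ m ∈ t, (m:ℝ)^2 *
        (if 1 ≤ m ∧ (m:ℝ) ≤ Nr^(κ/2+ε) then b^2/(25*(m:ℝ)^2) else 0)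
        ≤ (if 1 ≤ m ∧ (m:ℝ) ≤ Nr^(κ/2+ε) then b^2/25 else 0) := by
      intro m _
      split_ifs with hc
      · have hm1 : (1:ℝ) ≤ (m:ℝ) := by exact_mod_cast hc.1
        have hm0 : (m:ℝ) ≠ 0 := ne_of_gt (lt_of_lt_of_le one_pos hm1)
        have : (m:ℝ)^2 * (b^2/(25*(m:ℝ)^2)) = b^2/25 := by field_simp
        linarith only [this]
      · simp
    calc (∑ m ∈ t, (m:ℝ)^2 *
          (if 1 ≤ m ∧ (m:ℝ) ≤ Nr^(κ/2+ε) then b^2/(25*(m:ℝ)^2) else 0))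
        ≤ ∑ m ∈ t, (if 1 ≤ m ∧ (m:ℝ) ≤ Nr^(κ/2+ε) then b^2/25 else 0) := Finset.sum_le_sum hper
      _ ≤ Nr^(κ/2+ε)*(b^2/25) := by
          apply sum_cut t (Nr^(κ/2+ε)) (b^2/25) (hrp _).le (by positivity) (fun _ => b^2/25)
          intro m _ _
          exact le_refl _
  -- numeric closers
  have hN3bound : 26*(Nr^(κ/2+ε)*(b/78)) ≤ (2*sa^3+a8)*Nr^(3*κ/2+ε) := by
    calc 26*(Nr^(κ/2+ε)*(b/78)) = (26/78)*(Nr^(κ/2+ε)*b) := by ring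
      _ = (26/78)*(a8*Nr^(3*κ/2+ε)) := by rw [hbRL]
      _ ≤ (2*sa^3+a8)*Nr^(3*κ/2+ε) := by
          have h2 : 0 ≤ a8*Nr^(3*κ/2+ε) := mul_nonneg ha8.le (hrp _).le
          have h3 : 0 ≤ sa^3*Nr^(3*κ/2+ε) := mul_nonneg h3nn (hrp _).le
          linarith only [h2, h3]
  have hN4bound : 26*(Nr^(κ/2+ε)*((Nr^(κ/2+ε))^2) + Nr^(κ/2+ε)*(b/78))
      ≤ (26+(2*sa^3+a8))*Nr^(3*κ/2+3*ε) := by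
    have h0 : 26*(Nr^(κ/2+ε)*((Nr^(κ/2+ε))^2)) = 26*Nr^(3*κ/2+3*ε) := by rw [hRL3]
    have h1 : (2*sa^3+a8)*Nr^(3*κ/2+ε) ≤ (2*sa^3+a8)*Nr^(3*κ/2+3*ε) :=
      mul_le_mul_of_nonneg_left (hmono _ _ (by linarith)) (by linarith [h3nn, ha8.le])
    linarith only [hN3bound, h0, h1]
  have hq0 : b^2/Real.sqrt b = Real.sqrt b*b := by
    rw [eq_comm, eq_div_iff (ne_of_gt hsbpos)]
    calc Real.sqrt b*b*Real.sqrt b = (Real.sqrt b*Real.sqrt b)*b := by ring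
      _ = b*b := by rw [hss]
      _ = b^2 := by ring
  have hN5bound : 26*(Real.sqrt b*(b/17) + b^2/3042*(2/Real.sqrt b))
      ≤ (26*sa^3)*Nr^(3*κ/2) := by
    have hq : b^2/3042*(2/Real.sqrt b) = (2/3042)*(Real.sqrt b*b) := by
      rw [show b^2/3042*(2/Real.sqrt b) = (2/3042)*(b^2/Real.sqrt b) by ring, hq0]
    calc 26*(Real.sqrt b*(b/17) + b^2/3042*(2/Real.sqrt b))
        = (26/17)*(Real.sqrt b*b) + 26*(b^2/3042*(2/Real.sqrt b)) := by ring
      _ = (26/17)*(Real.sqrt b*b) + 26*((2/3042)*(Real.sqrt b*b)) := by rw [hq]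
      _ ≤ 26*(Real.sqrt b*b) := by
          linarith only [mul_nonneg (Real.sqrt_nonneg b) hb.le]
      _ = (26*sa^3)*Nr^(3*κ/2) := by rw [hE3]; ring
  have hN6bound : 26*(Nr^(κ/2+ε)*(b^2/25)) ≤ (182*sa^5+2*a8^2)*Nr^(5*κ/2+ε) := by
    calc 26*(Nr^(κ/2+ε)*(b^2/25)) = (26/25)*(Nr^(κ/2+ε)*b^2) := by ring
      _ = (26/25)*(a8^2*Nr^(5*κ/2+ε)) := by rw [hb2RL]
      _ ≤ (182*sa^5+2*a8^2)*Nr^(5*κ/2+ε) := by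
          have h2 : 0 ≤ a8^2*Nr^(5*κ/2+ε) := mul_nonneg (sq_nonneg a8) (hrp _).le
          have h3 : 0 ≤ sa^5*Nr^(5*κ/2+ε) := mul_nonneg h5nn (hrp _).le
          linarith only [h2, h3]
  -- item 3 sum
  obtain ⟨hsm3, hts3⟩ := tsum_subtype_le_shell
    (P := fun n : Fin 3 → ℤ => n ≠ 0 ∧ ‖latticePt n‖ ≤ Nr^(κ/2+ε))
    (f := fun p => |γ p.1 * σ p.1|)
    (fun m : ℕ => if 1 ≤ m ∧ (m:ℝ) ≤ Nr^(κ/2+ε) then b/(78*(m:ℝ)^2) else 0)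
    (by simp) (fun m => by
      split_ifs with hc
      · have hm1 : (1:ℝ) ≤ (m:ℝ) := by exact_mod_cast hc.1
        have := hb.le
        positivity
      · exact le_refl _)
    (Nr^(κ/2+ε)*(b/78)) hA3 (fun p => abs_nonneg _)
    (fun p => by
      have hcond : 1 ≤ boxNorm p.1 ∧ ((boxNorm p.1 : ℝ)) ≤ Nr^(κ/2+ε) :=
        ⟨one_le_boxNorm p.2.1, le_trans (boxNorm_le_norm p.1) p.2.2⟩
      simp only [if_pos hcond]
      exact (PW p.1 p.2.1).2.2.2.1)
  -- item 4 sum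
  obtain ⟨hsm4, hts4⟩ := tsum_subtype_le_shell
    (P := fun n : Fin 3 → ℤ => n ≠ 0 ∧ ‖latticePt n‖ ≤ Nr^(κ/2+ε))
    (f := fun p => (γ p.1)^2)
    (fun m : ℕ => if 1 ≤ m ∧ (m:ℝ) ≤ Nr^(κ/2+ε) then 1 + b/(78*(m:ℝ)^2) else 0)
    (by simp) (fun m => by
      split_ifs with hc
      · have hm1 : (1:ℝ) ≤ (m:ℝ) := by exact_mod_cast hc.1
        have hb' := hb.le
        positivity
      · exact le_refl _)
    (Nr^(κ/2+ε)*((Nr^(κ/2+ε))^2) + Nr^(κ/2+ε)*(b/78)) hA4 (fun p => sq_nonneg _)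
    (fun p => by
      have hcond : 1 ≤ boxNorm p.1 ∧ ((boxNorm p.1 : ℝ)) ≤ Nr^(κ/2+ε) :=
        ⟨one_le_boxNorm p.2.1, le_trans (boxNorm_le_norm p.1) p.2.2⟩
      simp only [if_pos hcond]
      have h1 := (PW p.1 p.2.1).1
      have h2 := le_trans (PW p.1 p.2.1).2.1 (PW p.1 p.2.1).2.2.2.1
      linarith only [h1, h2])
  -- item 5 sum (full lattice)
  obtain ⟨hsm5, hts5⟩ := tsum_subtype_le_shell
    (P := fun n : Fin 3 → ℤ => n ≠ 0)
    (f := fun p => (σ p.1)^2)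
    (fun m : ℕ => if 1 ≤ m then min (Real.sqrt b/(17*(m:ℝ))) (b^2/(3042*(m:ℝ)^4)) else 0)
    (by simp) (fun m => by
      split_ifs with hc
      · have hm1 : (1:ℝ) ≤ (m:ℝ) := by exact_mod_cast hc
        have hb' := hb.le
        exact le_min (by positivity) (by positivity)
      · exact le_refl _)
    (Real.sqrt b*(b/17) + b^2/3042*(2/Real.sqrt b)) hA5 (fun p => sq_nonneg _)
    (fun p => by
      simp only [if_pos (one_le_boxNorm p.2)]
      exact le_min (le_trans (PW p.1 p.2).2.1 (PW p.1 p.2).2.2.1) (PW p.1 p.2).2.2.2.2.1)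
  -- item 6 sum
  obtain ⟨hsm6, hts6⟩ := tsum_subtype_le_shell
    (P := fun n : Fin 3 → ℤ => n ≠ 0 ∧ ‖latticePt n‖ ≤ Nr^(κ/2+ε))
    (f := fun p => ‖latticePt p.1‖^2 * (σ p.1)^2)
    (fun m : ℕ => if 1 ≤ m ∧ (m:ℝ) ≤ Nr^(κ/2+ε) then b^2/(25*(m:ℝ)^2) else 0)
    (by simp) (fun m => by
      split_ifs with hc
      · have hm1 : (1:ℝ) ≤ (m:ℝ) := by exact_mod_cast hc.1
        have hb' := hb.le
        positivity
      · exact le_refl _)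
    (Nr^(κ/2+ε)*(b^2/25)) hA6
    (fun p => mul_nonneg (sq_nonneg _) (sq_nonneg _))
    (fun p => by
      have hn0 := p.2.1
      have hm1 : (1:ℝ) ≤ ((boxNorm p.1 : ℝ)) := by exact_mod_cast one_le_boxNorm hn0
      have hcond : 1 ≤ boxNorm p.1 ∧ ((boxNorm p.1 : ℝ)) ≤ Nr^(κ/2+ε) :=
        ⟨one_le_boxNorm hn0, le_trans (boxNorm_le_norm p.1) p.2.2⟩
      simp only [if_pos hcond]
      have h6 := pointwise_bounds6 b (‖latticePt p.1‖^2) ((boxNorm p.1 : ℝ)) ((σ p.1)^2)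
        hb hm1 (X_upper p.1) (sq_nonneg _)
        (le_trans (PW p.1 hn0).2.1 (PW p.1 hn0).2.2.1) (PW p.1 hn0).2.2.2.2.1
      exact le_trans h6 (min_le_right _ _))
  -- item 7 sum (P_S, σ²)
  obtain ⟨hsm7, hts7⟩ := tsum_subtype_le_shell
    (P := fun n : Fin 3 → ℤ => n ≠ 0 ∧ Nr^(κ/2-ε) ≤ ‖latticePt n‖ ∧ ‖latticePt n‖ ≤ Nr^(κ/2+ε))
    (f := fun p => (σ p.1)^2)
    (fun m : ℕ => if 1 ≤ m then min (Real.sqrt b/(17*(m:ℝ))) (b^2/(3042*(m:ℝ)^4)) else 0)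
    (by simp) (fun m => by
      split_ifs with hc
      · have hm1 : (1:ℝ) ≤ (m:ℝ) := by exact_mod_cast hc
        have hb' := hb.le
        exact le_min (by positivity) (by positivity)
      · exact le_refl _)
    (Real.sqrt b*(b/17) + b^2/3042*(2/Real.sqrt b)) hA5 (fun p => sq_nonneg _)
    (fun p => by
      simp only [if_pos (one_le_boxNorm p.2.1)]
      exact le_min (le_trans (PW p.1 p.2.1).2.1 (PW p.1 p.2.1).2.2.1)
        (PW p.1 p.2.1).2.2.2.2.1)
  -- item 8 sum (P_S, |p|²σ²)
  obtain ⟨hsm8, hts8⟩ := tsum_subtype_le_shell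
    (P := fun n : Fin 3 → ℤ => n ≠ 0 ∧ Nr^(κ/2-ε) ≤ ‖latticePt n‖ ∧ ‖latticePt n‖ ≤ Nr^(κ/2+ε))
    (f := fun p => ‖latticePt p.1‖^2 * (σ p.1)^2)
    (fun m : ℕ => if 1 ≤ m ∧ (m:ℝ) ≤ Nr^(κ/2+ε) then b^2/(25*(m:ℝ)^2) else 0)
    (by simp) (fun m => by
      split_ifs with hc
      · have hm1 : (1:ℝ) ≤ (m:ℝ) := by exact_mod_cast hc.1
        have hb' := hb.le
        positivity
      · exact le_refl _)
    (Nr^(κ/2+ε)*(b^2/25)) hA6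
    (fun p => mul_nonneg (sq_nonneg _) (sq_nonneg _))
    (fun p => by
      have hn0 := p.2.1
      have hm1 : (1:ℝ) ≤ ((boxNorm p.1 : ℝ)) := by exact_mod_cast one_le_boxNorm hn0
      have hcond : 1 ≤ boxNorm p.1 ∧ ((boxNorm p.1 : ℝ)) ≤ Nr^(κ/2+ε) :=
        ⟨one_le_boxNorm hn0, le_trans (boxNorm_le_norm p.1) p.2.2.2⟩
      simp only [if_pos hcond]
      have h6 := pointwise_bounds6 b (‖latticePt p.1‖^2) ((boxNorm p.1 : ℝ)) ((σ p.1)^2)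
        hb hm1 (X_upper p.1) (sq_nonneg _)
        (le_trans (PW p.1 hn0).2.1 (PW p.1 hn0).2.2.1) (PW p.1 hn0).2.2.2.2.1
      exact le_trans h6 (min_le_right _ _))
  -- sup bounds for large momenta (items 9 and 10)
  have hsup : ∀ n : Fin 3 → ℤ, n ≠ 0 → Nr^(κ/2-ε) ≤ ‖latticePt n‖ →
      σ n^2 ≤ sa*Nr^ε/2 := by
    intro n hn hlow
    have hm1 : (1:ℝ) ≤ (boxNorm n : ℝ) := by exact_mod_cast one_le_boxNorm hn
    have hX39 : 39*((boxNorm n : ℝ))^2 ≤ ‖latticePt n‖^2 := X_lower n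
    have hA0 : (0:ℝ) < (boxNorm n : ℝ) := lt_of_lt_of_le one_pos hm1
    have hX0 : 0 < ‖latticePt n‖^2 :=
      lt_of_lt_of_le (mul_pos (by norm_num) (pow_pos hA0 2)) hX39
    obtain ⟨c1, c2, c3, c4, c5, c6⟩ := hyper_core b (‖latticePt n‖^2) (τ n) hb hX0 (hτ n hn)
    rw [← hσ n] at c6
    have hXlow : (Nr^(κ/2-ε))^2 ≤ ‖latticePt n‖^2 :=
      pow_le_pow_left₀ (hrp (κ/2-ε)).le hlow 2
    have hXeq : (Nr^(κ/2-ε))^2 = Nr^(κ-2*ε) := by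
      rw [hsq2]; rw [show 2*(κ/2-ε) = κ-2*ε by ring]
    rw [hXeq] at hXlow
    have hbound : b/(2*‖latticePt n‖^2) ≤ (sa*Nr^ε)^2 := by
      have h2 : (sa*Nr^ε)^2 = a8*Nr^(2*ε) := by rw [mul_pow, hsa2, hsq2]
      have h4 : Nr^κ = Nr^(2*ε)*Nr^(κ-2*ε) := by
        rw [hadd, show 2*ε+(κ-2*ε) = κ by ring]
      rw [h2, hbdef, h4]
      rw [div_le_iff₀ (by linarith only [hrp (κ-2*ε), hXlow])]
      have h5 : a8*Nr^(2*ε)*Nr^(κ-2*ε) ≤ a8*Nr^(2*ε)*‖latticePt n‖^2 :=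
        mul_le_mul_of_nonneg_left hXlow (mul_nonneg ha8.le (hrp _).le)
      linarith only [h5, mul_nonneg (mul_nonneg ha8.le (hrp (2*ε)).le) hX0.le]
    have hsq : Real.sqrt (b/(2*‖latticePt n‖^2)) ≤ sa*Nr^ε := by
      calc Real.sqrt (b/(2*‖latticePt n‖^2)) ≤ Real.sqrt ((sa*Nr^ε)^2) :=
            Real.sqrt_le_sqrt hbound
        _ = sa*Nr^ε := Real.sqrt_sq (mul_nonneg hsa.le (hrp _).le)
    linarith only [c6, hsq]
  -- assemble
  refine ⟨?_, ?_, ?_, ?_, ?_, ?_, ?_, ?_, ?_, ?_, ?_⟩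
  · -- item 1: sup_{P_L} γ²
    intro n hn _
    refine final (1+sa) _ _ hCge1 ?_
    have h1 := (PW n hn).1
    have h2 := (PW n hn).2.2.2.2.2
    have h3 : Real.sqrt b/16 ≤ sa*Nr^(κ/2) := by
      rw [hsb]
      linarith only [mul_nonneg hsa.le (hrp (κ/2)).le]
    have h4 := hone (κ/2) (by linarith only [hκ1])
    have h5 : 0 ≤ sa*Nr^(κ/2) := mul_nonneg hsa.le (hrp _).le
    linarith only [h1, h2, h3, h4, h5]
  · -- item 2: sup_{P_L} σ²
    intro n hn _
    refine final (1+sa) _ _ hCge1 ?_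
    have h2 := (PW n hn).2.2.2.2.2
    have h3 : Real.sqrt b/16 ≤ sa*Nr^(κ/2) := by
      rw [hsb]
      linarith only [mul_nonneg hsa.le (hrp (κ/2)).le]
    have h4 := hone (κ/2) (by linarith only [hκ1])
    have h5 : 0 ≤ sa*Nr^(κ/2) := mul_nonneg hsa.le (hrp _).le
    linarith only [h2, h3, h4, h5]
  · -- item 3
    refine final (2*sa^3+a8) _ _ hCge3 (le_trans hts3 hN3bound)
  · -- item 4
    refine final (26+(2*sa^3+a8)) _ _ hCge4 (le_trans hts4 hN4bound)
  · -- item 5 summability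
    exact hsm5
  · -- item 5 sum bound
    refine final (26*sa^3) _ _ hCge5 (le_trans hts5 hN5bound)
  · -- item 6
    refine final (182*sa^5+2*a8^2) _ _ hCge6 (le_trans hts6 hN6bound)
  · -- item 7
    refine final (26*sa^3) _ _ hCge5 (le_trans hts7 hN5bound)
  · -- item 8
    refine final (182*sa^5+2*a8^2) _ _ hCge6 (le_trans hts8 hN6bound)
  · -- item 9
    intro n hn hlow _
    refine final (1+sa) _ _ hCge1 ?_
    have h1 := hsup n hn hlow
    have h2 := hone ε hε.le
    have h3 : 0 ≤ sa*Nr^ε := mul_nonneg hsa.le (hrp _).le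
    linarith only [h1, h2, h3, hrp ε]
  · -- item 10
    intro n hn hlow _
    refine final (1+sa) _ _ hCge1 ?_
    have h0 := (PW n hn).1
    have h1 := hsup n hn hlow
    have h2 := hone ε hε.le
    have h3 : 0 ≤ sa*Nr^ε := mul_nonneg hsa.le (hrp _).le
    linarith only [h0, h1, h2, h3, hrp ε]
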